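/- Let {T_n} be a sequence in B(X) such that each T_n commutes with T, which is (n₀,m)-regular for nonnegative integers n₀, m, and suppose there exists C > 0 with ‖T_n (T−I)^m x‖ ≤ C‖(T−I)^m x‖ for all n and all x ∈ X. Then the continuous seminorm γ(x) = limsup_{n→∞} ‖T_n (T−I)^m x‖ satisfies γ(T x) = γ(x) for every x ∈ X (equivalently, the operator V_γ induced by T on the completion of X modulo the kernel of γ is an isometry). -/

import Mathlib

/-!
Put `y = (T - I)^m x`. Since `T` commutes with `(T - I)^m` and with every `T_n`, the `n`-th term
of the left-hand limsup is `‖T T_n y‖`, which by regularity differs from `‖T_{n+n₀} y‖` by a null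
sequence. The latter sequence is bounded by `C‖y‖`, so the two limsups agree, and shifting the
index by `n₀` does not change a limsup.
-/

open Filter Topology

/-- (n₀,m)-regularity: ‖(T T_n − T_{n+n₀})x‖ → 0 for every x ∈ range((T−I)^m). -/
def RegularSeq {X : Type*} [NormedAddCommGroup X] [NormedSpace ℂ X]
    (T : X →L[ℂ] X) (Tn : ℕ → X →L[ℂ] X) (n₀ m : ℕ) : Prop :=
  ∀ x ∈ Set.range ⇑((T - 1) ^ m),
    Tendsto (fun n => ‖T (Tn n x) - Tn (n + n₀) x‖) atTop (𝓝 0)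

section LimsupSub

variable {ι α : Type*} [AddCommGroup α] [ConditionallyCompleteLinearOrder α] [DenselyOrdered α]
  [IsOrderedAddMonoid α] [TopologicalSpace α] [OrderTopology α]
  {f : Filter ι} [f.NeBot] {u v : ι → α}

theorem limsup_le_of_tendsto_sub_zero (h : Tendsto (u - v) f (𝓝 0))
    (hv_le : IsBoundedUnder (· ≤ ·) f v) (hv_ge : IsBoundedUnder (· ≥ ·) f v) :
    limsup u f ≤ limsup v f :=
  calc limsup u f = limsup (v + (u - v)) f := by rw [add_sub_cancel]
    _ ≤ limsup v f + limsup (u - v) f :=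
        limsup_add_le hv_ge hv_le h.isBoundedUnder_ge.isCoboundedUnder_le h.isBoundedUnder_le
    _ = limsup v f := by rw [h.limsup_eq, add_zero]

theorem limsup_eq_of_tendsto_sub_zero (h : Tendsto (u - v) f (𝓝 0))
    (hv_le : IsBoundedUnder (· ≤ ·) f v) (hv_ge : IsBoundedUnder (· ≥ ·) f v) :
    limsup u f = limsup v f := by
  have hu : u = v + (u - v) := (add_sub_cancel v u).symm
  have hu_le : IsBoundedUnder (· ≤ ·) f u := hu ▸ isBoundedUnder_le_add hv_le h.isBoundedUnder_le
  have hu_ge : IsBoundedUnder (· ≥ ·) f u := hu ▸ isBoundedUnder_ge_add hv_ge h.isBoundedUnder_ge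
  have h' : Tendsto (v - u) f (𝓝 0) := by
    rw [← neg_sub, ← neg_zero]
    exact h.neg
  exact (limsup_le_of_tendsto_sub_zero h hv_le hv_ge).antisymm
    (limsup_le_of_tendsto_sub_zero h' hu_le hu_ge)

end LimsupSub

theorem tendsto_norm_sub_norm_of_tendsto_norm_sub {ι E : Type*} [SeminormedAddCommGroup E]
    {f : Filter ι} {a b : ι → E} (h : Tendsto (fun i => ‖a i - b i‖) f (𝓝 0)) :
    Tendsto (fun i => ‖a i‖ - ‖b i‖) f (𝓝 0) :=
  tendsto_zero_iff_abs_tendsto_zero _ |>.mpr <|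
    squeeze_zero (fun _ => abs_nonneg _) (fun _ => abs_norm_sub_norm_le _ _) h

theorem ContinuousLinearMap.sub_one_pow_apply_comm {R M : Type*} [Ring R]
    [AddCommGroup M] [Module R M] [TopologicalSpace M] [IsTopologicalAddGroup M]
    (T : M →L[R] M) (m : ℕ) (x : M) : ((T - 1) ^ m) (T x) = T (((T - 1) ^ m) x) :=
  congrArg (· x) (((Commute.refl T).sub_left (Commute.one_left T)).pow_left m).eq

theorem stmt5_general {X : Type*} [NormedAddCommGroup X] [NormedSpace ℂ X]
    (T : X →L[ℂ] X) (Tn : ℕ → X →L[ℂ] X)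
    (hcomm : ∀ n, Tn n ∘L T = T ∘L Tn n)
    (n₀ m : ℕ) (hreg : RegularSeq T Tn n₀ m)
    (C : ℝ)
    (hbdd : ∀ n (x : X), ‖Tn n (((T - 1) ^ m) x)‖ ≤ C * ‖((T - 1) ^ m) x‖) :
    ∀ x : X,
      limsup (fun n => ‖Tn n (((T - 1) ^ m) (T x))‖) atTop
        = limsup (fun n => ‖Tn n (((T - 1) ^ m) x)‖) atTop := by
  intro x
  set y := ((T - 1) ^ m) x
  have hTn : ∀ n, Tn n (((T - 1) ^ m) (T x)) = T (Tn n y) := fun n => by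
    rw [T.sub_one_pow_apply_comm]
    exact congrArg (· y) (hcomm n)
  have hdiff : Tendsto (fun n => ‖T (Tn n y)‖ - ‖Tn (n + n₀) y‖) atTop (𝓝 0) :=
    tendsto_norm_sub_norm_of_tendsto_norm_sub (hreg y ⟨x, rfl⟩)
  have hle : IsBoundedUnder (· ≤ ·) atTop fun n => ‖Tn (n + n₀) y‖ :=
    isBoundedUnder_of ⟨C * ‖y‖, fun n => hbdd (n + n₀) x⟩
  have hge : IsBoundedUnder (· ≥ ·) atTop fun n => ‖Tn (n + n₀) y‖ :=
    isBoundedUnder_of ⟨0, fun n => norm_nonneg _⟩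
  simp_rw [hTn]
  rw [limsup_eq_of_tendsto_sub_zero hdiff hle hge]
  exact limsup_nat_add (fun n => ‖Tn n y‖) n₀

/-- If each T_n commutes with T, {T_n} is (n₀,m)-regular and
‖T_n (T−I)^m x‖ ≤ C‖(T−I)^m x‖ for all n, x, then the seminorm
γ(x) = limsup_n ‖T_n (T−I)^m x‖ satisfies γ(T x) = γ(x) for every x. -/
theorem stmt5 {X : Type*} [NormedAddCommGroup X] [NormedSpace ℂ X] [CompleteSpace X]
    (T : X →L[ℂ] X) (Tn : ℕ → X →L[ℂ] X)
    (hcomm : ∀ n, Tn n ∘L T = T ∘L Tn n)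
    (n₀ m : ℕ) (hreg : RegularSeq T Tn n₀ m)
    (C : ℝ) (hC : 0 < C)
    (hbdd : ∀ n (x : X), ‖Tn n (((T - 1) ^ m) x)‖ ≤ C * ‖((T - 1) ^ m) x‖) :
    ∀ x : X,
      limsup (fun n => ‖Tn n (((T - 1) ^ m) (T x))‖) atTop
        = limsup (fun n => ‖Tn n (((T - 1) ^ m) x)‖) atTop :=
  stmt5_general T Tn hcomm n₀ m hreg C hbdd
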